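/- arXiv:1108.4219 — 4 statements merged into one kernel-verified Lean document; each statement's English description precedes it below -/
import Mathlib

section
/- Let Φ be a root system of a finite-dimensional complex simple Lie algebra with at most two root lengths whose squared lengths differ by a factor of 2 or 3, let ℓ be an odd positive integer not divisible by 3 when the factor 3 occurs, and let λ be a weight. If α₁, α₂ are positive roots with (λ+ρ, α₁^∨) ≡ 0 (mod ℓ) and (λ+ρ, α₂^∨) ≡ 0 (mod ℓ), and a₁α₁ + a₂α₂ is a positive root for integers a₁, a₂, then (λ+ρ, (a₁α₁+a₂α₂)^∨) ≡ 0 (mod ℓ). -/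
/-!
Write `n = (λ+ρ, β^∨)` for `β = a₁α₁ + a₂α₂`. Since `(α, α)` is an integer for every root,
`n (β, β) = 2(λ+ρ, β) = a₁ (λ+ρ, α₁^∨)(α₁, α₁) + a₂ (λ+ρ, α₂^∨)(α₂, α₂)` lies in `ℓℤ`, and
`(β, β) ∈ {2, 4, 6}` is prime to `ℓ`, so `ℓ ∣ n`.
-/

open scoped RealInnerProductSpace
open AddSubgroup

theorem mem_zmultiples_intCast_iff {ℓ : ℤ} {x : ℝ} :
    x ∈ zmultiples (ℓ : ℝ) ↔ ∃ t : ℤ, x = ((ℓ * t : ℤ) : ℝ) := by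
  simp only [mem_zmultiples_iff, zsmul_eq_mul, Int.cast_mul, mul_comm, eq_comm]

theorem intCast_mem_zmultiples_intCast_iff {ℓ m : ℤ} :
    (m : ℝ) ∈ zmultiples (ℓ : ℝ) ↔ ℓ ∣ m := by
  simp only [mem_zmultiples_intCast_iff, Int.cast_inj, dvd_def]

theorem exists_intCast_eq_isCoprime_of_odd {ℓ : ℤ} {x : ℝ} (hℓ : Odd ℓ)
    (hx : x = 2 ∨ x = 4 ∨ x = 6) (h3 : x = 6 → ¬ 3 ∣ ℓ) : ∃ c : ℤ, x = c ∧ IsCoprime ℓ c := by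
  have h2 : IsCoprime ℓ 2 :=
    (Int.prime_two.coprime_iff_not_dvd.mpr (Int.not_even_iff_odd.mpr hℓ ∘ even_iff_two_dvd.mpr)).symm
  rcases hx with rfl | rfl | rfl
  · exact ⟨2, by norm_num, h2⟩
  · exact ⟨4, by norm_num, by simpa using h2.mul_right h2⟩
  · have h3' : IsCoprime ℓ 3 := (Int.prime_three.coprime_iff_not_dvd.mpr (h3 rfl)).symm
    exact ⟨6, by norm_num, by simpa using h2.mul_right h3'⟩

section
variable {E : Type*} [NormedAddCommGroup E] [InnerProductSpace ℝ E]

theorem two_mul_inner_eq_coroot_pairing_mul (μ α : E) :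
    2 * ⟪μ, α⟫ = 2 * ⟪μ, α⟫ / ⟪α, α⟫ * ⟪α, α⟫ :=
  (div_mul_cancel_of_imp fun h => by simp [inner_self_eq_zero.mp h]).symm

theorem two_mul_inner_mem_zmultiples {ℓ c : ℤ} {μ α : E} (hα : ⟪α, α⟫ = c)
    (h : 2 * ⟪μ, α⟫ / ⟪α, α⟫ ∈ zmultiples (ℓ : ℝ)) : 2 * ⟪μ, α⟫ ∈ zmultiples (ℓ : ℝ) := by
  rw [two_mul_inner_eq_coroot_pairing_mul, hα, mul_comm, ← zsmul_eq_mul]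
  exact zsmul_mem (hα ▸ h) c

theorem coroot_pairing_mem_zmultiples {ℓ c n : ℤ} {μ β : E} (hβ : ⟪β, β⟫ = c)
    (hcop : IsCoprime ℓ c) (hn : 2 * ⟪μ, β⟫ / ⟪β, β⟫ = n)
    (h : 2 * ⟪μ, β⟫ ∈ zmultiples (ℓ : ℝ)) : 2 * ⟪μ, β⟫ / ⟪β, β⟫ ∈ zmultiples (ℓ : ℝ) := by
  rw [two_mul_inner_eq_coroot_pairing_mul, hn, hβ, ← Int.cast_mul,
    intCast_mem_zmultiples_intCast_iff] at h
  rw [hn, intCast_mem_zmultiples_intCast_iff]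
  exact hcop.dvd_of_dvd_mul_right h

end

theorem stmt_0_general
    (E : Type*) [NormedAddCommGroup E] [InnerProductSpace ℝ E]
    (Φpos : Set E) (lr : E) (ℓ : ℤ) (hℓodd : Odd ℓ)
    -- normalization: short roots have squared length 2, at most two lengths,
    -- squared lengths differ by a factor of 2 or 3
    (hlen : ∀ α ∈ Φpos, ⟪α, α⟫ = 2 ∨ ⟪α, α⟫ = 4 ∨ ⟪α, α⟫ = 6)
    -- ℓ is not divisible by 3 when the factor 3 occurs
    (h3 : (∃ α ∈ Φpos, ⟪α, α⟫ = 6) → ¬ (3 ∣ ℓ))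
    -- integrality of the coroot pairings of the weight λ (via λ+ρ)
    (hint : ∀ α ∈ Φpos, ∃ n : ℤ, 2 * ⟪lr, α⟫ / ⟪α, α⟫ = (n : ℝ))
    (α₁ α₂ : E) (hα₁ : α₁ ∈ Φpos) (hα₂ : α₂ ∈ Φpos)
    (hc₁ : ∃ r : ℤ, 2 * ⟪lr, α₁⟫ / ⟪α₁, α₁⟫ = ((ℓ * r : ℤ) : ℝ))
    (hc₂ : ∃ s : ℤ, 2 * ⟪lr, α₂⟫ / ⟪α₂, α₂⟫ = ((ℓ * s : ℤ) : ℝ))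
    (a₁ a₂ : ℤ) (hsum : (a₁ : ℝ) • α₁ + (a₂ : ℝ) • α₂ ∈ Φpos) :
    ∃ t : ℤ, 2 * ⟪lr, (a₁ : ℝ) • α₁ + (a₂ : ℝ) • α₂⟫ /
        ⟪(a₁ : ℝ) • α₁ + (a₂ : ℝ) • α₂, (a₁ : ℝ) • α₁ + (a₂ : ℝ) • α₂⟫
      = ((ℓ * t : ℤ) : ℝ) := by
  have hroot : ∀ α ∈ Φpos, ∃ c : ℤ, ⟪α, α⟫ = c ∧ IsCoprime ℓ c := fun α hα =>
    exists_intCast_eq_isCoprime_of_odd hℓodd (hlen α hα) fun h => h3 ⟨α, hα, h⟩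
  obtain ⟨c₁, hαc₁, -⟩ := hroot α₁ hα₁
  obtain ⟨c₂, hαc₂, -⟩ := hroot α₂ hα₂
  obtain ⟨c, hβc, hcop⟩ := hroot _ hsum
  obtain ⟨n, hn⟩ := hint _ hsum
  rw [← mem_zmultiples_intCast_iff] at hc₁ hc₂ ⊢
  refine coroot_pairing_mem_zmultiples hβc hcop hn ?_
  have h₁ := two_mul_inner_mem_zmultiples hαc₁ hc₁
  have h₂ := two_mul_inner_mem_zmultiples hαc₂ hc₂
  rw [inner_add_right, real_inner_smul_right, real_inner_smul_right, mul_add,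
    mul_left_comm, mul_left_comm 2 (a₂ : ℝ), ← zsmul_eq_mul, ← zsmul_eq_mul]
  exact add_mem (zsmul_mem h₁ a₁) (zsmul_mem h₂ a₂)

theorem stmt_0
    (E : Type*) [NormedAddCommGroup E] [InnerProductSpace ℝ E]
    (Φpos : Set E) (lr : E) (ℓ : ℤ) (hℓodd : Odd ℓ) (hℓpos : 0 < ℓ)
    -- normalization: short roots have squared length 2, at most two lengths,
    -- squared lengths differ by a factor of 2 or 3
    (hlen : ∀ α ∈ Φpos, ⟪α, α⟫ = 2 ∨ ⟪α, α⟫ = 4 ∨ ⟪α, α⟫ = 6)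
    (htwo : ¬ ((∃ α ∈ Φpos, ⟪α, α⟫ = 4) ∧ (∃ α ∈ Φpos, ⟪α, α⟫ = 6)))
    -- ℓ is not divisible by 3 when the factor 3 occurs
    (h3 : (∃ α ∈ Φpos, ⟪α, α⟫ = 6) → ¬ (3 ∣ ℓ))
    -- integrality of the coroot pairings of the weight λ (via λ+ρ)
    (hint : ∀ α ∈ Φpos, ∃ n : ℤ, 2 * ⟪lr, α⟫ / ⟪α, α⟫ = (n : ℝ))
    (α₁ α₂ : E) (hα₁ : α₁ ∈ Φpos) (hα₂ : α₂ ∈ Φpos)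
    (hc₁ : ∃ r : ℤ, 2 * ⟪lr, α₁⟫ / ⟪α₁, α₁⟫ = ((ℓ * r : ℤ) : ℝ))
    (hc₂ : ∃ s : ℤ, 2 * ⟪lr, α₂⟫ / ⟪α₂, α₂⟫ = ((ℓ * s : ℤ) : ℝ))
    (a₁ a₂ : ℤ) (hsum : (a₁ : ℝ) • α₁ + (a₂ : ℝ) • α₂ ∈ Φpos) :
    ∃ t : ℤ, 2 * ⟪lr, (a₁ : ℝ) • α₁ + (a₂ : ℝ) • α₂⟫ /
        ⟪(a₁ : ℝ) • α₁ + (a₂ : ℝ) • α₂, (a₁ : ℝ) • α₁ + (a₂ : ℝ) • α₂⟫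
      = ((ℓ * t : ℤ) : ℝ) :=
  stmt_0_general E Φpos lr ℓ hℓodd hlen h3 hint α₁ α₂ hα₁ hα₂ hc₁ hc₂ a₁ a₂ hsum
end

section
/- For an indeterminate q, the Gaussian binomial coefficient [2ℓ choose t] at q specialized to a primitive ℓ-th root of unity ζ (ℓ odd) vanishes for all 0 < t < ℓ. -/
/-!
STATEMENT 2: The balanced Gaussian binomial coefficient [2ℓ choose t] specialized at a
primitive ℓ-th root of unity ζ (ℓ odd) vanishes for 0 < t < ℓ.

The balanced q-binomial coefficients [m choose n] = [m]!/([n]![m−n]!)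
(with [n] = (qⁿ−q⁻ⁿ)/(q−q⁻¹)) are Laurent polynomials in q; they are characterized by
the Pascal-type recurrence
  [m+1 choose n+1] = q^{(m+1)-(n+1)} [m choose n] + q^{-(n+1)} [m choose n+1],
  [m choose 0] = 1,  [0 choose n+1] = 0,
which we use to define their specialization `qBinom ζ m n` at an invertible element ζ of
a field k.
-/

/-- The balanced Gaussian binomial coefficient specialized at the unit `ζ`. -/
def qBinom {k : Type*} [Field k] (ζ : kˣ) : ℕ → ℕ → k
  | _, 0 => 1
  | 0, _ + 1 => 0
  | m + 1, n + 1 =>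
      ((ζ : k) ^ (m - n)) * qBinom ζ m n + (((ζ⁻¹ : kˣ) : k) ^ (n + 1)) * qBinom ζ m (n + 1)

section aux
variable {k : Type*} [Field k] (ζ : kˣ)

lemma qBinom_zero_right (m : ℕ) : qBinom ζ m 0 = 1 := by cases m <;> rfl

lemma qBinom_eq_zero_of_lt : ∀ {m n : ℕ}, m < n → qBinom ζ m n = 0
  | 0, n + 1, _ => rfl
  | m + 1, n + 1, h => by
      have h1 : m < n := by omega
      rw [qBinom, qBinom_eq_zero_of_lt h1, qBinom_eq_zero_of_lt (by omega : m < n + 1)]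
      ring

lemma qBinom_succ_succ (m n : ℕ) :
    qBinom ζ (m + 1) (n + 1)
      = ((ζ : k) ^ (m - n)) * qBinom ζ m n
        + (((ζ⁻¹ : kˣ) : k) ^ (n + 1)) * qBinom ζ m (n + 1) := by
  rw [qBinom]

lemma qBinom_one (m : ℕ) :
    ((ζ : k) - ((ζ⁻¹ : kˣ) : k)) * qBinom ζ m 1
      = (ζ : k) ^ m - ((ζ⁻¹ : kˣ) : k) ^ m := by
  induction m with
  | zero => rw [qBinom_eq_zero_of_lt ζ (by omega : (0:ℕ) < 1)]; simp
  | succ m ih =>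
    rw [show (1:ℕ) = 0 + 1 from rfl, qBinom, qBinom_zero_right, Nat.sub_zero]
    linear_combination ((ζ⁻¹ : kˣ) : k) * ih

lemma qBinom_step : ∀ (m n : ℕ),
    ((ζ : k) ^ (m - n) - ((ζ⁻¹ : kˣ) : k) ^ (m - n)) * qBinom ζ m n
      = ((ζ : k) ^ (n + 1) - ((ζ⁻¹ : kˣ) : k) ^ (n + 1)) * qBinom ζ m (n + 1) := by
  intro m
  induction m with
  | zero =>
    intro n
    rw [Nat.zero_sub, qBinom_eq_zero_of_lt ζ (by omega : (0:ℕ) < n + 1)]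
    simp
  | succ m ih =>
    intro n
    rcases Nat.lt_or_ge n (m + 1) with h | h
    · cases n with
      | zero =>
        simp only [Nat.zero_add, Nat.sub_zero]
        rw [qBinom_zero_right, ← qBinom_one]
        ring
      | succ n =>
        have hn : n < m := by omega
        obtain ⟨d, rfl⟩ : ∃ d, m = n + d + 1 := ⟨m - n - 1, by omega⟩
        have ih1 := ih n
        have ih2 := ih (n + 1)
        rw [show n + d + 1 - n = d + 1 from by omega] at ih1
        rw [show n + d + 1 - (n + 1) = d from by omega] at ih2
        rw [qBinom_succ_succ ζ (n + d + 1) n, qBinom_succ_succ ζ (n + d + 1) (n + 1),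
          show n + d + 1 - n = d + 1 from by omega,
          show n + d + 1 - (n + 1) = d from by omega,
          show n + d + 1 + 1 - (n + 1) = d + 1 from by omega]
        linear_combination ((ζ : k) ^ (d + 1)) * ih1
          + (((ζ⁻¹ : kˣ) : k) ^ (n + 2)) * ih2
    · rw [show m + 1 - n = 0 from by omega,
        qBinom_eq_zero_of_lt ζ (by omega : m + 1 < n + 1)]
      simp

end aux

theorem stmt_2 {k : Type*} [Field k] (ℓ : ℕ) (hℓ : Odd ℓ) (hℓ1 : 1 < ℓ)
    (ζ : kˣ) (hζ : IsPrimitiveRoot (ζ : k) ℓ)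
    (t : ℕ) (ht0 : 0 < t) (htℓ : t < ℓ) :
    qBinom ζ (2 * ℓ) t = 0 := by
  have hzl : (ζ : k) ^ ℓ = 1 := hζ.pow_eq_one
  have hwz : ((ζ⁻¹ : kˣ) : k) * (ζ : k) = 1 := by
    rw [Units.val_inv_eq_inv_val]
    exact inv_mul_cancel₀ ζ.ne_zero
  have hwl : ((ζ⁻¹ : kˣ) : k) ^ ℓ = 1 := by
    have := congrArg (· ^ ℓ) hwz
    simpa only [mul_pow, hzl, one_pow, mul_one] using this
  have hz2 : (ζ : k) ^ (2 * ℓ) = 1 := by rw [mul_comm, pow_mul, hzl, one_pow]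
  have hw2 : ((ζ⁻¹ : kˣ) : k) ^ (2 * ℓ) = 1 := by rw [mul_comm, pow_mul, hwl, one_pow]
  have nonzero : ∀ j : ℕ, 0 < j → j < ℓ → (ζ : k) ^ j - ((ζ⁻¹ : kˣ) : k) ^ j ≠ 0 := by
    intro j hj0 hjl heq
    rw [sub_eq_zero] at heq
    have h2j : (ζ : k) ^ (2 * j) = 1 := by
      rw [two_mul, pow_add]
      calc (ζ : k) ^ j * (ζ : k) ^ j
          = ((ζ⁻¹ : kˣ) : k) ^ j * (ζ : k) ^ j := by rw [← heq]
        _ = (((ζ⁻¹ : kˣ) : k) * (ζ : k)) ^ j := (mul_pow _ _ _).symm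
        _ = 1 := by rw [hwz, one_pow]
    have hdvd : ℓ ∣ 2 * j := hζ.dvd_of_pow_eq_one _ h2j
    have hcop : Nat.Coprime ℓ 2 := Nat.coprime_two_right.mpr hℓ
    have hlj : ℓ ∣ j := hcop.dvd_of_dvd_mul_left hdvd
    exact absurd (Nat.le_of_dvd hj0 hlj) (by omega)
  have key : ∀ j, j < ℓ → 0 < j → qBinom ζ (2 * ℓ) j = 0 := by
    intro j
    induction j with
    | zero => omega
    | succ j ihj =>
      intro hjl _
      have hstep := qBinom_step ζ (2 * ℓ) j
      have hL : ((ζ : k) ^ (2 * ℓ - j) - ((ζ⁻¹ : kˣ) : k) ^ (2 * ℓ - j))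
          * qBinom ζ (2 * ℓ) j = 0 := by
        rcases Nat.eq_zero_or_pos j with rfl | hj
        · rw [Nat.sub_zero, qBinom_zero_right, mul_one, hz2, hw2]
          ring
        · rw [ihj (by omega) hj, mul_zero]
      rw [hL] at hstep
      have hne := nonzero (j + 1) (by omega) (by omega)
      exact ((mul_eq_zero.mp hstep.symm).resolve_left hne)
  exact key t htℓ ht0
end

section
/- Consider the translation quiver ℤ[𝔸∞] with vertices labeled (n,m), n ∈ ℤ, m ∈ ℕ, arrows (n,m) → (n,m+1) and (n,m+1) → (n+1,m), and a dimension function dim: ℤ[𝔸∞] → ℕ satisfying the mesh condition dim(n,m+1) + dim(n+1,m−1) = dim(n,m) + dim(n+1,m) outside a finite region. Suppose all maps (n,m) → (n+1,m−1) are surjective for n < a and all maps (n,m) → (n,m+1) are injective for n+m > a+b (for fixed a,b). Then for n < a and n+m ≤ a+b one has dim(n,m) ≥ min{a−n+1, m}, and for n ≥ a and n+m > a+b one has dim(n,m) ≥ min{n+m−(a+b), m}. -/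
/-!
STATEMENT 9: Dimension bounds on the translation quiver ℤ[𝔸∞].

Vertices are pairs (n,m) with n : ℤ and m ≥ 1 (we use `dim : ℤ → ℤ → ℕ` with the
convention `dim n 0 = 0` for the empty boundary vertex).  Arrows are
(n,m) → (n,m+1) and (n,m+1) → (n+1,m).  `surj n m` expresses that the map
(n,m) → (n+1,m−1) is surjective and `inj n m` that the map (n,m) → (n,m+1) is
injective; surjectivity/injectivity give the corresponding dimension inequalities.
The mesh condition holds outside the finite region {(n,m) | n ≥ a, n+m ≤ a+b}
(the meshes associated with projective modules), and surjectivity propagates: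
if (n,m) → (n+1,m−1) is surjective then (n,m+1) → (n+1,m) is surjective, dually
for injectivity (every irreducible map is injective or surjective).
-/

theorem stmt_9
    (dim : ℤ → ℤ → ℕ) (surj inj : ℤ → ℤ → Prop) (a b : ℤ) (hb : 1 ≤ b)
    (hdim0 : ∀ n : ℤ, dim n 0 = 0)
    (hdimpos : ∀ n m : ℤ, 1 ≤ m → 0 < dim n m)
    -- mesh condition outside the finite region of projective meshes
    (hmesh : ∀ n m : ℤ, 1 ≤ m → (n < a ∨ a + b < n + m) →
      dim n (m + 1) + dim (n + 1) (m - 1) = dim n m + dim (n + 1) m)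
    -- dimension consequences of surjectivity/injectivity
    (hsurj_dim : ∀ n m : ℤ, 1 ≤ m → surj n m → dim (n + 1) (m - 1) ≤ dim n m)
    (hinj_dim : ∀ n m : ℤ, 1 ≤ m → inj n m → dim n m ≤ dim n (m + 1))
    -- each irreducible map is injective or surjective, and the propagation rules
    (hsurj_prop : ∀ n m : ℤ, 1 ≤ m → surj n m → surj n (m + 1))
    (hinj_prop : ∀ n m : ℤ, 1 ≤ m → inj (n + 1) (m - 1) → inj n m)
    -- hypotheses: surjectivity for n < a, injectivity for n + m > a + b
    (hS : ∀ n m : ℤ, 1 ≤ m → n < a → surj n m)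
    (hI : ∀ n m : ℤ, 1 ≤ m → a + b < n + m → inj n m) :
    (∀ n m : ℤ, 1 ≤ m → n < a → n + m ≤ a + b →
        min (a - n + 1) m ≤ (dim n m : ℤ)) ∧
    (∀ n m : ℤ, 1 ≤ m → a ≤ n → a + b < n + m →
        min (n + m - (a + b)) m ≤ (dim n m : ℤ)) := by
  -- difference of consecutive dimensions propagates along diagonals via the mesh relation
  have Dstep : ∀ n m : ℤ, 1 ≤ m → (n < a ∨ a + b < n + m) →
      (dim n (m + 1) : ℤ) - dim n m = (dim (n + 1) m : ℤ) - dim (n + 1) (m - 1) := by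
    intro n m hm hc
    have h := hmesh n m hm hc
    have h' : (dim n (m + 1) : ℤ) + dim (n + 1) (m - 1) = dim n m + dim (n + 1) m := by
      exact_mod_cast h
    linarith
  have LemB : ∀ k : ℕ, ∀ n j : ℤ, (k : ℤ) + 1 ≤ j →
      (∀ i : ℤ, 0 ≤ i → i < (k : ℤ) → (n + i < a ∨ a + b < n + j - 1)) →
      (dim n j : ℤ) - dim n (j - 1)
        = (dim (n + k) (j - k) : ℤ) - dim (n + k) (j - k - 1) := by
    intro k
    induction k with
    | zero => intro n j _ _; norm_num
    | succ k ih =>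
      intro n j hj hcond
      have hk : ((k : ℤ) + 1 : ℤ) = ((k + 1 : ℕ) : ℤ) := by push_cast; ring
      have hj2 : 1 ≤ j - 1 := by push_cast at hj; omega
      have hc0 : n < a ∨ a + b < n + (j - 1) := by
        have := hcond 0 le_rfl (by push_cast; omega)
        omega
      have h1 := Dstep n (j - 1) hj2 hc0
      have e1 : j - 1 + 1 = j := by ring
      rw [e1] at h1
      have h2 := ih (n + 1) (j - 1) (by push_cast at hj ⊢; omega)
        (fun i hi0 hik => by
          have := hcond (i + 1) (by omega) (by push_cast at hik ⊢; omega)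
          omega)
      have e2 : n + 1 + (k : ℤ) = n + ((k + 1 : ℕ) : ℤ) := by push_cast; ring
      have e3 : j - 1 - (k : ℤ) = j - ((k + 1 : ℕ) : ℤ) := by push_cast; ring
      rw [e2, e3] at h2
      rw [h1, h2]
  have LemA : ∀ n j : ℤ, 1 ≤ j →
      (∀ i : ℤ, 0 ≤ i → i ≤ j - 2 → (n + i < a ∨ a + b < n + j - 1)) →
      1 ≤ (dim n j : ℤ) - dim n (j - 1) := by
    intro n j hj hcond
    have hk : (((j - 1).toNat : ℤ)) = j - 1 := Int.toNat_of_nonneg (by omega)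
    have key := LemB (j - 1).toNat n j (by omega)
      (fun i h0 hik => hcond i h0 (by omega))
    rw [hk] at key
    have e1 : n + (j - 1) = n + j - 1 := by ring
    have e2 : j - (j - 1) = 1 := by ring
    have e3 : (1 : ℤ) - 1 = 0 := by ring
    rw [e1, e2, e3] at key
    rw [key, hdim0]
    have := hdimpos (n + j - 1) 1 le_rfl
    push_cast
    omega
  -- strictly increasing along a column while strictly left of a
  have S1 : ∀ m : ℤ, 1 ≤ m → ∀ n : ℤ, m ≤ a - n + 1 → m ≤ (dim n m : ℤ) := by
    refine Int.le_induction ?_ ?_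
    · intro n _
      have := hdimpos n 1 le_rfl
      omega
    · intro m hm ih n hn
      have h1 := ih n (by omega)
      have h2 := LemA n (m + 1) (by omega) (fun i h0 hi2 => Or.inl (by omega))
      have e : m + 1 - 1 = m := by ring
      rw [e] at h2
      omega
  -- telescoping along the diagonal: columns left of a determined by column a
  have S2 : ∀ n : ℤ, n < a → ∀ m : ℤ, a - n ≤ m →
      (dim n m : ℤ) = dim n (a - n) + dim a (n + m - a) := by
    intro n hn
    refine Int.le_induction ?_ ?_
    · have e : n + (a - n) - a = 0 := by ring
      rw [e, hdim0]
      simp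
    · intro m hm ih
      have hkk : (((a - n).toNat : ℤ)) = a - n := Int.toNat_of_nonneg (by omega)
      have key := LemB (a - n).toNat n (m + 1) (by omega)
        (fun i h0 hik => Or.inl (by rw [hkk] at hik; omega))
      rw [hkk] at key
      have e1 : n + (a - n) = a := by ring
      have e2 : m + 1 - (a - n) = n + m + 1 - a := by ring
      have e4 : m + 1 - 1 = m := by ring
      rw [e1, e2, e4] at key
      have e5 : n + m + 1 - a - 1 = n + m - a := by ring
      rw [e5] at key
      have e6 : n + (m + 1) - a = n + m + 1 - a := by ring
      rw [e6]
      omega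
  -- strictly increasing along a column, to the right of the diagonal n+m = a+b
  have S3 : ∀ n t : ℤ, 1 ≤ t → a + b + 1 ≤ n + t → ∀ m : ℤ, t ≤ m →
      (dim n t : ℤ) + (m - t) ≤ dim n m := by
    intro n t ht hnt
    refine Int.le_induction ?_ ?_
    · omega
    · intro m hm ih
      have key := LemA n (m + 1) (by omega) (fun i h0 hi => Or.inr (by omega))
      have e : m + 1 - 1 = m := by ring
      rw [e] at key
      omega
  constructor
  · intro n m hm hn _
    rcases le_or_gt m (a - n + 1) with h | h
    · have := S1 m hm n h
      omega
    · have h1 := S2 n hn m (by omega)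
      have h2 := S1 (a - n) (by omega) n (by omega)
      have h3 := hdimpos a (n + m - a) (by omega)
      omega
  · intro n m hm hn hab
    set t : ℤ := max 1 (a + b + 1 - n) with ht
    have ht1 : 1 ≤ t := le_max_left _ _
    have ht2 : a + b + 1 - n ≤ t := le_max_right _ _
    have ht3 : t ≤ m := max_le hm (by omega)
    have h1 := hdimpos n t ht1
    have h2 := S3 n t ht1 (by omega) m ht3
    have ht4 : t = 1 ∨ t = a + b + 1 - n := by
      rcases le_total 1 (a + b + 1 - n) with h | h
      · right; rw [ht, max_eq_right h]
      · left; rw [ht, max_eq_left h]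
    omega
end

section
/- Let ℓ > 1 and p ≥ 3. The algebra given by the quiver with vertex set ℤ/ℓ × ℤ/p, arrows a_{ij}: (i,j) → (i+1, j+ξ) and b_{ij}: (i,j) → (i, j+1) (for a fixed ξ ∈ ℤ/p), and relations b_{i+1,j+ξ} a_{ij} = a_{i,j+1} b_{ij}, a_{i+ℓ−1, j+(ℓ−1)ξ} ⋯ a_{ij} = 0, b_{i,j+p−1} ⋯ b_{ij} = 0, has dimension ℓ·p·ℓ·p = ℓ²p² over the base field. -/
/-!
STATEMENT 14: The bound quiver algebra of U_ζ(B₁) for sl₂ has dimension ℓ²p².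

The quiver has vertex set ℤ/ℓ × ℤ/p, arrows a_{ij} : (i,j) → (i+1,j+ξ) and
b_{ij} : (i,j) → (i,j+1), and relations
  b_{i+1,j+ξ} a_{ij} = a_{i,j+1} b_{ij},
  a_{i+ℓ−1,j+(ℓ−1)ξ} ⋯ a_{ij} = 0,  b_{i,j+p−1} ⋯ b_{ij} = 0.
We present the path algebra with relations as the quotient (via `RingQuot`) of the free
algebra on generators `e v` (paths of length zero), `a v`, `b v` by the path-algebra
relations (orthogonal idempotents summing to 1, source/target conditions for the arrows)
together with the three families of relations above.  Composition of paths is written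
multiplicatively; paths of a's are `aPath`, paths of b's are `bPath`.
-/

namespace Stmt14

variable (k : Type*) [Field k] (ℓ p : ℕ) [NeZero ℓ] [NeZero p] (ξ : ZMod p)

/-- Generators of the path algebra: vertex idempotents and the two families of arrows. -/
inductive Gen (ℓ p : ℕ) : Type
  | e : ZMod ℓ × ZMod p → Gen ℓ p
  | a : ZMod ℓ × ZMod p → Gen ℓ p
  | b : ZMod ℓ × ZMod p → Gen ℓ p

open FreeAlgebra

/-- The generator `x` as an element of the free algebra. -/
noncomputable def g (x : Gen ℓ p) : FreeAlgebra k (Gen ℓ p) := FreeAlgebra.ι k x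

/-- The path a_{v + (s-1)·(1,ξ)} ⋯ a_v of length `s` starting at `v`. -/
noncomputable def aPath : ℕ → ZMod ℓ × ZMod p → FreeAlgebra k (Gen ℓ p)
  | 0, v => g k ℓ p (Gen.e v)
  | s + 1, v => g k ℓ p (Gen.a (v + ((s : ZMod ℓ), (s : ZMod p) * ξ))) * aPath s v

/-- The path b_{v + (0,s-1)} ⋯ b_v of length `s` starting at `v`. -/
noncomputable def bPath : ℕ → ZMod ℓ × ZMod p → FreeAlgebra k (Gen ℓ p)
  | 0, v => g k ℓ p (Gen.e v)
  | s + 1, v => g k ℓ p (Gen.b (v + (0, (s : ZMod p)))) * bPath s v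

/-- The defining relations of the bound quiver algebra. -/
inductive Rel : FreeAlgebra k (Gen ℓ p) → FreeAlgebra k (Gen ℓ p) → Prop
  /-- The `e v` are orthogonal idempotents. -/
  | orth : ∀ v w, v ≠ w → Rel (g k ℓ p (Gen.e v) * g k ℓ p (Gen.e w)) 0
  | idem : ∀ v, Rel (g k ℓ p (Gen.e v) * g k ℓ p (Gen.e v)) (g k ℓ p (Gen.e v))
  /-- The vertex idempotents sum to 1. -/
  | unit : Rel (∑ v : ZMod ℓ × ZMod p, g k ℓ p (Gen.e v)) 1
  /-- `a v` is an arrow from `v` to `v + (1, ξ)`. -/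
  | aArrow : ∀ v, Rel (g k ℓ p (Gen.a v))
      (g k ℓ p (Gen.e (v + (1, ξ))) * g k ℓ p (Gen.a v) * g k ℓ p (Gen.e v))
  /-- `b v` is an arrow from `v` to `v + (0, 1)`. -/
  | bArrow : ∀ v, Rel (g k ℓ p (Gen.b v))
      (g k ℓ p (Gen.e (v + (0, 1))) * g k ℓ p (Gen.b v) * g k ℓ p (Gen.e v))
  /-- Commutativity relation b_{i+1,j+ξ} a_{ij} = a_{i,j+1} b_{ij}. -/
  | comm : ∀ v, Rel (g k ℓ p (Gen.b (v + (1, ξ))) * g k ℓ p (Gen.a v))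
      (g k ℓ p (Gen.a (v + (0, 1))) * g k ℓ p (Gen.b v))
  /-- Paths of a's of length ℓ vanish. -/
  | aNil : ∀ v, Rel (aPath k ℓ p ξ ℓ v) 0
  /-- Paths of b's of length p vanish. -/
  | bNil : ∀ v, Rel (bPath k ℓ p p v) 0

/-- The bound quiver algebra `kQ/I`. -/
noncomputable abbrev BoundQuiverAlgebra : Type _ := RingQuot (Rel k ℓ p ξ)

end Stmt14

/-!
The paths `a^s b^t e_v` with `s < ℓ` and `t < p` span `kQ/I`: their span contains
`1 = ∑ e_v` and is stable under left multiplication by every `e_w`, `a_w`, `b_w`, since the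
commutativity relation moves a `b` past a string of `a`'s and the nilpotency relations kill
longer paths. They are linearly independent because `kQ/I` acts by matrices over
`R = k[x]/(x^ℓ) ⊗ k[y]/(y^p)`: `e_v ↦ E_vv`, `a_v ↦ x E_{v+(1,ξ),v}`, `b_v ↦ y E_{v+(0,1),v}`
respects the relations, and sends `a^s b^t e_v` to `x^s y^t E_{w,v}`; these are independent
because the monomials `x^s y^t` are.
-/

theorem Submodule.eq_top_of_one_mem_of_mul_mem {R A : Type*} [CommSemiring R] [Semiring A]
    [Algebra R A] {s : Set A} (hs : Algebra.adjoin R s = ⊤) (S : Submodule R A) (h1 : 1 ∈ S)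
    (hmul : ∀ x ∈ s, ∀ y ∈ S, x * y ∈ S) : S = ⊤ := by
  rw [eq_top_iff]
  rintro z -
  have hz : z ∈ Algebra.adjoin R s := hs ▸ Algebra.mem_top
  suffices ∀ y ∈ S, z * y ∈ S by simpa using this 1 h1
  induction hz using Algebra.adjoin_induction with
  | mem x hx => exact hmul x hx
  | algebraMap r => intro y hy; simpa [Algebra.algebraMap_eq_smul_one] using S.smul_mem r hy
  | add x x' _ _ hx hx' => intro y hy; rw [add_mul]; exact S.add_mem (hx y hy) (hx' y hy)
  | mul x x' _ _ hx hx' => intro y hy; rw [mul_assoc]; exact hx _ (hx' y hy)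

namespace Stmt14

variable {k : Type*} [Field k] {ℓ p : ℕ} [NeZero ℓ] [NeZero p] {ξ : ZMod p}

omit [NeZero ℓ] [NeZero p] in
lemma pair_natCast_mul_eq_nsmul (s : ℕ) :
    ((s : ZMod ℓ), (s : ZMod p) * ξ) = s • ((1 : ZMod ℓ), ξ) :=
  Prod.ext (by simp) (by simp [nsmul_eq_mul])

omit [NeZero ℓ] [NeZero p] in
lemma pair_zero_natCast_eq_nsmul (t : ℕ) :
    ((0 : ZMod ℓ), (t : ZMod p)) = t • ((0 : ZMod ℓ), (1 : ZMod p)) :=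
  Prod.ext (by simp) (by simp)

variable (k ξ) in
noncomputable abbrev mk : FreeAlgebra k (Gen ℓ p) →ₐ[k] BoundQuiverAlgebra k ℓ p ξ :=
  RingQuot.mkAlgHom k (Rel k ℓ p ξ)

variable (k ξ) in
noncomputable def e (v : ZMod ℓ × ZMod p) : BoundQuiverAlgebra k ℓ p ξ := mk k ξ (g k ℓ p (.e v))

variable (k ξ) in
noncomputable def a (v : ZMod ℓ × ZMod p) : BoundQuiverAlgebra k ℓ p ξ := mk k ξ (g k ℓ p (.a v))

variable (k ξ) in
noncomputable def b (v : ZMod ℓ × ZMod p) : BoundQuiverAlgebra k ℓ p ξ := mk k ξ (g k ℓ p (.b v))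

lemma mk_eq_of_rel {x y : FreeAlgebra k (Gen ℓ p)} (h : Rel k ℓ p ξ x y) : mk k ξ x = mk k ξ y :=
  RingQuot.mkAlgHom_rel k h

lemma e_mul_e_self (v : ZMod ℓ × ZMod p) : e k ξ v * e k ξ v = e k ξ v := by
  rw [e, ← map_mul]
  exact mk_eq_of_rel (Rel.idem v)

lemma e_mul_e_of_ne {v w : ZMod ℓ × ZMod p} (h : v ≠ w) : e k ξ v * e k ξ w = 0 := by
  simpa [e] using mk_eq_of_rel (Rel.orth (k := k) (ξ := ξ) v w h)

lemma sum_e : ∑ v : ZMod ℓ × ZMod p, e k ξ v = 1 := by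
  simpa [e] using mk_eq_of_rel (Rel.unit (k := k) (ξ := ξ))

lemma a_eq (v : ZMod ℓ × ZMod p) : a k ξ v = e k ξ (v + (1, ξ)) * a k ξ v * e k ξ v := by
  simpa [e, a] using mk_eq_of_rel (Rel.aArrow (k := k) v)

lemma b_eq (v : ZMod ℓ × ZMod p) : b k ξ v = e k ξ (v + (0, 1)) * b k ξ v * e k ξ v := by
  simpa [e, b] using mk_eq_of_rel (Rel.bArrow (k := k) (ξ := ξ) v)

lemma b_mul_a (v : ZMod ℓ × ZMod p) :
    b k ξ (v + (1, ξ)) * a k ξ v = a k ξ (v + (0, 1)) * b k ξ v := by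
  simpa [a, b] using mk_eq_of_rel (Rel.comm (k := k) v)

lemma e_mul_eq_ite {x : BoundQuiverAlgebra k ℓ p ξ} {u : ZMod ℓ × ZMod p} (hx : e k ξ u * x = x)
    (w : ZMod ℓ × ZMod p) : e k ξ w * x = if w = u then x else 0 := by
  split_ifs with h
  · rwa [h]
  · rw [← hx, ← mul_assoc, e_mul_e_of_ne h, zero_mul]

lemma e_mul_a (v : ZMod ℓ × ZMod p) : e k ξ (v + (1, ξ)) * a k ξ v = a k ξ v := by
  conv_lhs => rw [a_eq]
  rw [← mul_assoc, ← mul_assoc, e_mul_e_self, ← a_eq]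

lemma a_mul_e (v : ZMod ℓ × ZMod p) : a k ξ v * e k ξ v = a k ξ v := by
  conv_lhs => rw [a_eq]
  rw [mul_assoc, e_mul_e_self, ← a_eq]

lemma e_mul_b (v : ZMod ℓ × ZMod p) : e k ξ (v + (0, 1)) * b k ξ v = b k ξ v := by
  conv_lhs => rw [b_eq]
  rw [← mul_assoc, ← mul_assoc, e_mul_e_self, ← b_eq]

lemma b_mul_e (v : ZMod ℓ × ZMod p) : b k ξ v * e k ξ v = b k ξ v := by
  conv_lhs => rw [b_eq]
  rw [mul_assoc, e_mul_e_self, ← b_eq]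

lemma mk_aPath_zero (v : ZMod ℓ × ZMod p) : mk k ξ (aPath k ℓ p ξ 0 v) = e k ξ v := rfl

lemma mk_bPath_zero (v : ZMod ℓ × ZMod p) : mk k ξ (bPath k ℓ p 0 v) = e k ξ v := rfl

lemma mk_aPath_succ (s : ℕ) (v : ZMod ℓ × ZMod p) :
    mk k ξ (aPath k ℓ p ξ (s + 1) v) = a k ξ (v + s • (1, ξ)) * mk k ξ (aPath k ℓ p ξ s v) := by
  rw [aPath, map_mul, pair_natCast_mul_eq_nsmul]
  rfl

lemma mk_bPath_succ (t : ℕ) (v : ZMod ℓ × ZMod p) :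
    mk k ξ (bPath k ℓ p (t + 1) v) = b k ξ (v + t • (0, 1)) * mk k ξ (bPath k ℓ p t v) := by
  rw [bPath, map_mul, pair_zero_natCast_eq_nsmul]
  rfl

lemma e_mul_mk_aPath (s : ℕ) (v : ZMod ℓ × ZMod p) :
    e k ξ (v + s • (1, ξ)) * mk k ξ (aPath k ℓ p ξ s v) = mk k ξ (aPath k ℓ p ξ s v) := by
  induction s with
  | zero => rw [zero_smul, add_zero, mk_aPath_zero, e_mul_e_self]
  | succ s _ => rw [mk_aPath_succ, ← mul_assoc, succ_nsmul, ← add_assoc, e_mul_a]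

lemma mk_aPath_eq_zero {s : ℕ} (hs : ℓ ≤ s) (v : ZMod ℓ × ZMod p) :
    mk k ξ (aPath k ℓ p ξ s v) = 0 := by
  induction s, hs using Nat.le_induction with
  | base => simpa using mk_eq_of_rel (Rel.aNil (k := k) v)
  | succ s _ ih => rw [mk_aPath_succ, ih, mul_zero]

lemma mk_bPath_eq_zero {t : ℕ} (ht : p ≤ t) (v : ZMod ℓ × ZMod p) :
    mk k ξ (bPath k ℓ p t v) = 0 := by
  induction t, ht using Nat.le_induction with
  | base => simpa using mk_eq_of_rel (Rel.bNil (k := k) (ξ := ξ) v)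
  | succ t _ ih => rw [mk_bPath_succ, ih, mul_zero]

lemma b_mul_mk_aPath (s : ℕ) (v : ZMod ℓ × ZMod p) :
    b k ξ (v + s • (1, ξ)) * mk k ξ (aPath k ℓ p ξ s v)
      = mk k ξ (aPath k ℓ p ξ s (v + (0, 1))) * b k ξ v := by
  induction s with
  | zero => rw [zero_smul, add_zero, mk_aPath_zero, mk_aPath_zero, b_mul_e, e_mul_b]
  | succ s ih =>
    rw [mk_aPath_succ, ← mul_assoc, succ_nsmul, ← add_assoc, b_mul_a, mul_assoc, ih,
      mk_aPath_succ, ← mul_assoc, add_right_comm]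

variable (ξ) in
def head (v : ZMod ℓ × ZMod p) (s t : ℕ) : ZMod ℓ × ZMod p := v + t • (0, 1) + s • (1, ξ)

variable (k ξ) in
noncomputable def path (v : ZMod ℓ × ZMod p) (s t : ℕ) : BoundQuiverAlgebra k ℓ p ξ :=
  mk k ξ (aPath k ℓ p ξ s (v + t • (0, 1))) * mk k ξ (bPath k ℓ p t v)

lemma path_zero_zero (v : ZMod ℓ × ZMod p) : path k ξ v 0 0 = e k ξ v := by
  rw [path, zero_smul, add_zero, mk_aPath_zero, mk_bPath_zero, e_mul_e_self]

lemma e_mul_path (w v : ZMod ℓ × ZMod p) (s t : ℕ) :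
    e k ξ w * path k ξ v s t = if w = head ξ v s t then path k ξ v s t else 0 :=
  e_mul_eq_ite (by rw [path, ← mul_assoc, head, e_mul_mk_aPath]) w

lemma a_mul_path (w v : ZMod ℓ × ZMod p) (s t : ℕ) :
    a k ξ w * path k ξ v s t = if w = head ξ v s t then path k ξ v (s + 1) t else 0 := by
  rw [← a_mul_e, mul_assoc, e_mul_path]
  split_ifs with h
  · rw [h, path, path, head, ← mul_assoc, mk_aPath_succ]
  · rw [mul_zero]

lemma b_mul_path (w v : ZMod ℓ × ZMod p) (s t : ℕ) :
    b k ξ w * path k ξ v s t = if w = head ξ v s t then path k ξ v s (t + 1) else 0 := by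
  rw [← b_mul_e, mul_assoc, e_mul_path]
  split_ifs with h
  · rw [h, path, path, head, ← mul_assoc, b_mul_mk_aPath, mul_assoc, mk_bPath_succ, add_assoc,
      ← succ_nsmul]
  · rw [mul_zero]

variable (k ℓ ξ) in
noncomputable def boundedPath (i : (ZMod ℓ × ZMod p) × Fin ℓ × Fin p) :
    BoundQuiverAlgebra k ℓ p ξ :=
  path k ξ i.1 i.2.1 i.2.2

lemma path_mem_span (v : ZMod ℓ × ZMod p) (s t : ℕ) :
    path k ξ v s t ∈ Submodule.span k (Set.range (boundedPath k ℓ ξ)) := by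
  by_cases hs : s < ℓ
  · by_cases ht : t < p
    · exact Submodule.subset_span ⟨(v, ⟨s, hs⟩, ⟨t, ht⟩), rfl⟩
    · rw [path, mk_bPath_eq_zero (not_lt.mp ht), mul_zero]
      exact Submodule.zero_mem _
  · rw [path, mk_aPath_eq_zero (not_lt.mp hs), zero_mul]
    exact Submodule.zero_mem _

lemma adjoin_range_mk_ι :
    Algebra.adjoin k (Set.range (mk k ξ ∘ FreeAlgebra.ι k (X := Gen ℓ p))) = ⊤ := by
  rw [Algebra.adjoin_range_eq_range_freeAlgebra_lift, FreeAlgebra.lift_comp_ι,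
    AlgHom.range_eq_top]
  exact RingQuot.mkAlgHom_surjective k _

lemma span_range_boundedPath :
    Submodule.span k (Set.range (boundedPath k ℓ ξ)) = ⊤ := by
  set S := Submodule.span k (Set.range (boundedPath k ℓ ξ))
  refine Submodule.eq_top_of_one_mem_of_mul_mem (adjoin_range_mk_ι (ℓ := ℓ) (p := p)) S ?_ ?_
  · rw [← sum_e]
    exact Submodule.sum_mem _ fun v _ => path_zero_zero (k := k) (ξ := ξ) v ▸ path_mem_span v 0 0
  · rintro _ ⟨x, rfl⟩ y hy
    refine (Submodule.span_le (p := S.comap (LinearMap.mulLeft k _))).mpr ?_ hy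
    have ite_mem (c : Prop) [Decidable c] (v : ZMod ℓ × ZMod p) (s t : ℕ) :
        (if c then path k ξ v s t else 0) ∈ S := by
      split_ifs
      exacts [path_mem_span v s t, S.zero_mem]
    rintro _ ⟨⟨v, s, t⟩, rfl⟩
    cases x with
    | e w => change e k ξ w * path k ξ v s t ∈ S; rw [e_mul_path]; exact ite_mem _ _ _ _
    | a w => change a k ξ w * path k ξ v s t ∈ S; rw [a_mul_path]; exact ite_mem _ _ _ _
    | b w => change b k ξ w * path k ξ v s t ∈ S; rw [b_mul_path]; exact ite_mem _ _ _ _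

section MatrixRepresentation

variable {R : Type*} [CommRing R] [Algebra k R] {x y : R}

variable (ξ) in
def generatorMatrix (x y : R) : Gen ℓ p → Matrix (ZMod ℓ × ZMod p) (ZMod ℓ × ZMod p) R
  | .e v => Matrix.single v v 1
  | .a v => Matrix.single (v + (1, ξ)) v x
  | .b v => Matrix.single (v + (0, 1)) v y

lemma lift_generatorMatrix_g (z : Gen ℓ p) :
    FreeAlgebra.lift k (generatorMatrix ξ x y) (g k ℓ p z) = generatorMatrix ξ x y z :=
  FreeAlgebra.lift_ι_apply _ _

lemma lift_generatorMatrix_aPath (s : ℕ) (v : ZMod ℓ × ZMod p) :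
    FreeAlgebra.lift k (generatorMatrix ξ x y) (aPath k ℓ p ξ s v)
      = Matrix.single (v + s • (1, ξ)) v (x ^ s) := by
  induction s with
  | zero => simp [aPath, lift_generatorMatrix_g, generatorMatrix]
  | succ s ih =>
    rw [aPath, map_mul, ih, lift_generatorMatrix_g, generatorMatrix, pair_natCast_mul_eq_nsmul,
      Matrix.single_mul_single_same, add_assoc, ← succ_nsmul, pow_succ']

lemma lift_generatorMatrix_bPath (t : ℕ) (v : ZMod ℓ × ZMod p) :
    FreeAlgebra.lift k (generatorMatrix ξ x y) (bPath k ℓ p t v)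
      = Matrix.single (v + t • (0, 1)) v (y ^ t) := by
  induction t with
  | zero => simp [bPath, lift_generatorMatrix_g, generatorMatrix]
  | succ t ih =>
    rw [bPath, map_mul, ih, lift_generatorMatrix_g, generatorMatrix, pair_zero_natCast_eq_nsmul,
      Matrix.single_mul_single_same, add_assoc, ← succ_nsmul, pow_succ']

lemma lift_generatorMatrix_eq_of_rel (hx : x ^ ℓ = 0) (hy : y ^ p = 0)
    {u w : FreeAlgebra k (Gen ℓ p)} (h : Rel k ℓ p ξ u w) :
    FreeAlgebra.lift k (generatorMatrix ξ x y) u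
      = FreeAlgebra.lift k (generatorMatrix ξ x y) w := by
  induction h with
  | orth v w hvw =>
    simp [lift_generatorMatrix_g, generatorMatrix, Matrix.single_mul_single_of_ne _ _ _ _ hvw]
  | idem v => simp [lift_generatorMatrix_g, generatorMatrix]
  | unit => simp [lift_generatorMatrix_g, generatorMatrix, Matrix.sum_single_one]
  | aArrow v => simp [lift_generatorMatrix_g, generatorMatrix]
  | bArrow v => simp [lift_generatorMatrix_g, generatorMatrix]
  | comm v => simp [lift_generatorMatrix_g, generatorMatrix, add_right_comm v, mul_comm x]
  | aNil v => simp [lift_generatorMatrix_aPath, hx]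
  | bNil v => simp [lift_generatorMatrix_bPath, hy]

variable (k ξ) in
noncomputable def matrixRep (hx : x ^ ℓ = 0) (hy : y ^ p = 0) :
    BoundQuiverAlgebra k ℓ p ξ →ₐ[k] Matrix (ZMod ℓ × ZMod p) (ZMod ℓ × ZMod p) R :=
  RingQuot.liftAlgHom k ⟨_, fun _ _ => lift_generatorMatrix_eq_of_rel hx hy⟩

lemma matrixRep_path (hx : x ^ ℓ = 0) (hy : y ^ p = 0) (v : ZMod ℓ × ZMod p) (s t : ℕ) :
    matrixRep k ξ hx hy (path k ξ v s t) = Matrix.single (head ξ v s t) v (x ^ s * y ^ t) := by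
  simp only [matrixRep, path, map_mul, RingQuot.liftAlgHom_mkAlgHom_apply,
    lift_generatorMatrix_aPath, lift_generatorMatrix_bPath, Matrix.single_mul_single_same, head]

lemma linearIndependent_boundedPath (hx : x ^ ℓ = 0) (hy : y ^ p = 0)
    (hxy : LinearIndependent k fun i : Fin ℓ × Fin p => x ^ (i.1 : ℕ) * y ^ (i.2 : ℕ)) :
    LinearIndependent k (boundedPath k ℓ ξ) := by
  -- column sums send `single w v r` to `Pi.single v r`, separating paths by their source
  let colSum : Matrix (ZMod ℓ × ZMod p) (ZMod ℓ × ZMod p) R →ₗ[k] (ZMod ℓ × ZMod p → R) :=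
    Matrix.liftLinear k fun _ j => LinearMap.single k (fun _ => R) j
  have hcol : ⇑(colSum ∘ₗ (matrixRep k ξ hx hy).toLinearMap) ∘ boundedPath k ℓ ξ
      = fun i : (ZMod ℓ × ZMod p) × Fin ℓ × Fin p =>
          Pi.single i.1 (x ^ (i.2.1 : ℕ) * y ^ (i.2.2 : ℕ)) := by
    ext ⟨v, s, t⟩ : 1
    simp [colSum, boundedPath, matrixRep_path]
  refine LinearIndependent.of_comp (colSum ∘ₗ (matrixRep k ξ hx hy).toLinearMap) ?_
  rw [hcol]
  exact (linearIndependent_equiv (Equiv.sigmaEquivProd _ _).symm).mpr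
    (Pi.linearIndependent_single (fun _ : ZMod ℓ × ZMod p => _) fun _ => hxy)

end MatrixRepresentation

open Polynomial in
lemma linearIndependent_pow_root (n : ℕ) :
    LinearIndependent k fun i : Fin n => AdjoinRoot.root (X ^ n : k[X]) ^ (i : ℕ) := by
  have h := (AdjoinRoot.powerBasis' (monic_X_pow (R := k) n)).basis.linearIndependent
  rw [PowerBasis.coe_basis] at h
  exact (linearIndependent_equiv (finCongr (natDegree_X_pow n))).mp h

open Polynomial TensorProduct in
lemma linearIndependent_root_tmul_root (ℓ p : ℕ) :
    LinearIndependent k fun i : Fin ℓ × Fin p =>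
      (AdjoinRoot.root (X ^ ℓ : k[X]) ⊗ₜ[k] (1 : AdjoinRoot (X ^ p : k[X]))) ^ (i.1 : ℕ)
        * (1 ⊗ₜ AdjoinRoot.root (X ^ p : k[X])) ^ (i.2 : ℕ) := by
  simpa [Algebra.TensorProduct.tmul_pow] using
    (linearIndependent_pow_root ℓ).tmul_of_isDomain (linearIndependent_pow_root p)

open Polynomial TensorProduct in
theorem finrank_boundQuiverAlgebra :
    Module.finrank k (BoundQuiverAlgebra k ℓ p ξ) = ℓ ^ 2 * p ^ 2 := by
  have root_pow_self (n : ℕ) : AdjoinRoot.root (X ^ n : k[X]) ^ n = 0 := by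
    rw [← AdjoinRoot.mk_X, ← map_pow, AdjoinRoot.mk_self]
  have hx : (AdjoinRoot.root (X ^ ℓ : k[X]) ⊗ₜ[k] (1 : AdjoinRoot (X ^ p : k[X]))) ^ ℓ = 0 := by
    rw [Algebra.TensorProduct.tmul_pow, root_pow_self, zero_tmul]
  have hy : ((1 : AdjoinRoot (X ^ ℓ : k[X])) ⊗ₜ[k] AdjoinRoot.root (X ^ p : k[X])) ^ p = 0 := by
    rw [Algebra.TensorProduct.tmul_pow, root_pow_self, tmul_zero]
  let basis := Module.Basis.mk (linearIndependent_boundedPath (ξ := ξ) hx hy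
    (linearIndependent_root_tmul_root ℓ p)) span_range_boundedPath.ge
  rw [Module.finrank_eq_card_basis basis]
  simp only [Fintype.card_prod, ZMod.card, Fintype.card_fin]
  ring

end Stmt14

theorem stmt_14 (k : Type*) [Field k] (ℓ p : ℕ) (hℓ : 1 < ℓ) (hp : 3 ≤ p) (ξ : ZMod p) :
    letI : NeZero ℓ := ⟨by omega⟩
    letI : NeZero p := ⟨by omega⟩
    Module.finrank k (Stmt14.BoundQuiverAlgebra k ℓ p ξ) = ℓ ^ 2 * p ^ 2 := by
  have : NeZero ℓ := ⟨by omega⟩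
  have : NeZero p := ⟨by omega⟩
  exact Stmt14.finrank_boundQuiverAlgebra
end
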